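/- Fix x ∈ Ω and α ∈ [0,1) with 𝒢(Ω(x,T_ℓ), α) nonempty, and let C = {s ∈ S : some entry of x equals s} be the set of support values occurring in x. Then B_{T_ℓ}^*(x) = inf{E[F] : F ∈ 𝒻_{C^+}(Ω(x,T_ℓ), α)}. -/

import Mathlib

noncomputable section

/-- Distributions on the finite support `S`, viewed as points of the probability
simplex inside `EuclideanSpace ℝ S` (Euclidean metric). -/
def distSet (S : Finset ℝ) : Set (EuclideanSpace ℝ ↥S) :=
  {F | (∀ s, 0 ≤ F s) ∧ ∑ s, F s = 1}

/-- Mean of a distribution on `S`. -/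
def distMean (S : Finset ℝ) (F : EuclideanSpace ℝ ↥S) : ℝ :=
  ∑ s : ↥S, F s * (s : ℝ)

open Classical in
/-- `P_F[A]`: probability of a set `A` of `n`-tuples under `n` i.i.d. draws from `F`. -/
def probOf (S : Finset ℝ) (n : ℕ) (F : EuclideanSpace ℝ ↥S)
    (A : Set (Fin n → ↥S)) : ℝ :=
  ∑ y : Fin n → ↥S, if y ∈ A then ∏ i, F (y i) else 0

/-- The interior likely set `𝒢(A, α)`. -/
def intLikely (S : Finset ℝ) (n : ℕ) (A : Set (Fin n → ↥S)) (α : ℝ) :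
    Set (EuclideanSpace ℝ ↥S) :=
  {F | F ∈ distSet S ∧ α < probOf S n F A}

/-- The likely set `𝒻(A, α)`: the closure of `𝒢(A, α)`. -/
def likely (S : Finset ℝ) (n : ℕ) (A : Set (Fin n → ↥S)) (α : ℝ) :
    Set (EuclideanSpace ℝ ↥S) :=
  closure (intLikely S n A α)

/-- `Ω`: the set of nondecreasing (`sorted`) `n`-tuples over `S`. -/
def sortedTuples (S : Finset ℝ) (n : ℕ) : Set (Fin n → ↥S) :=
  {x | Monotone x}

/-- The sorted version of a tuple. -/
def sortTup (S : Finset ℝ) (n : ℕ) (y : Fin n → ↥S) : Fin n → ↥S :=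
  y ∘ Tuple.sort y

/-- Probability of a set `A ⊆ Ω` of sorted tuples, identifying tuples with
their sorted versions. -/
def probSorted (S : Finset ℝ) (n : ℕ) (F : EuclideanSpace ℝ ↥S)
    (A : Set (Fin n → ↥S)) : ℝ :=
  probOf S n F {y | sortTup S n y ∈ A}

/-- Interior likely set for a set of sorted tuples. -/
def intLikelySorted (S : Finset ℝ) (n : ℕ) (A : Set (Fin n → ↥S)) (α : ℝ) :
    Set (EuclideanSpace ℝ ↥S) :=
  {F | F ∈ distSet S ∧ α < probSorted S n F A}

/-- Likely set for a set of sorted tuples. -/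
def likelySorted (S : Finset ℝ) (n : ℕ) (A : Set (Fin n → ↥S)) (α : ℝ) :
    Set (EuclideanSpace ℝ ↥S) :=
  closure (intLikelySorted S n A α)

/-- Upper set `Ω(x, R)` of `x` under a relation `R` on `Ω`. -/
def upperSet (S : Finset ℝ) (n : ℕ) (r : (Fin n → ↥S) → (Fin n → ↥S) → Prop)
    (x : Fin n → ↥S) : Set (Fin n → ↥S) :=
  {y ∈ sortedTuples S n | r x y}

/-- Pessimal bound `B_R^*(x) = inf {E[F] : F ∈ 𝒻(Ω(x,R), α)}`. -/
def pessimal (S : Finset ℝ) (n : ℕ) (r : (Fin n → ↥S) → (Fin n → ↥S) → Prop)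
    (α : ℝ) (x : Fin n → ↥S) : ℝ :=
  sInf (distMean S '' likelySorted S n (upperSet S n r x) α)

/-- `G` and `H` agree pointwise on `C`. -/
def ptAgree {S : Finset ℝ} (C : Set ↥S) (G H : EuclideanSpace ℝ ↥S) : Prop :=
  ∀ c ∈ C, G c = H c

open Classical in
/-- `G` and `H` agree cumulatively on `C`. -/
def cumAgree (S : Finset ℝ) (C : Set ↥S) (G H : EuclideanSpace ℝ ↥S) : Prop :=
  ∀ c ∈ C, (∑ s : ↥S, if s ≤ c then G s else 0) = ∑ s : ↥S, if s ≤ c then H s else 0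

/-- The refinement `𝒻_C`: distributions supported inside `C`. -/
def refinement (S : Finset ℝ) (C : Set ↥S) : Set (EuclideanSpace ℝ ↥S) :=
  {F ∈ distSet S | ∀ s, s ∉ C → F s = 0}

/-- `𝒢_C(A, α) = 𝒻_C ∩ 𝒢(A, α)` (for a set `A` of sorted tuples). -/
def intLikelySortedC (S : Finset ℝ) (n : ℕ) (C : Set ↥S)
    (A : Set (Fin n → ↥S)) (α : ℝ) : Set (EuclideanSpace ℝ ↥S) :=
  refinement S C ∩ intLikelySorted S n A α

/-- `𝒻_C(A, α)`: the closure of `𝒢_C(A, α)`. -/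
def likelySortedC (S : Finset ℝ) (n : ℕ) (C : Set ↥S)
    (A : Set (Fin n → ↥S)) (α : ℝ) : Set (EuclideanSpace ℝ ↥S) :=
  closure (intLikelySortedC S n C A α)

/-- The minimum of `S`, as an element of `↥S`. -/
def sMinElt (S : Finset ℝ) (hS : S.Nonempty) : ↥S :=
  ⟨S.min' hS, S.min'_mem hS⟩

/-- The augmentation `C⁺ = C ∪ {S_min} ∪ {succ c : c ∈ C, c ≠ S_max}`, where
`succ c` is the smallest element of `S` greater than `c`. -/
def aug (S : Finset ℝ) (hS : S.Nonempty) (C : Set ↥S) : Set ↥S :=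
  C ∪ {sMinElt S hS} ∪ {t | ∃ c ∈ C, c < t ∧ ∀ u : ↥S, c < u → t ≤ u}

/-- Low lexicographic order: `x ≤_{T_ℓ} y` iff `x = y` or `x i < y i` at the
smallest index `i` where `x` and `y` differ. -/
def lexLowLE {n : ℕ} {α : Type*} [LinearOrder α] (x y : Fin n → α) : Prop :=
  x = y ∨ ∃ i, x i < y i ∧ ∀ j, j < i → x j = y j

/-!
Let `φ` round each support point down to the largest element of `C⁺` below it. It is monotone
and lowers the mean, and since `C⁺` contains each value of `x` together with its successor,
`c < φ s ↔ c < s` and `c = φ s ↔ c = s` for every value `c` of `x`. Hence `φ` preserves whether a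
sorted sample lies in `Ω(x, T_ℓ)`, so pushing any `F ∈ 𝒢(Ω(x, T_ℓ), α)` forward along `φ` gives an
element of `𝒢_{C⁺}(Ω(x, T_ℓ), α)` with no larger mean. The two infima over `𝒢` and `𝒢_{C⁺}` thus
agree, and taking closures does not change the infimum of the continuous mean.
-/

open Finset

theorem csInf_image_closure {X α : Type*} [TopologicalSpace X] [ConditionallyCompleteLattice α]
    [TopologicalSpace α] [ClosedIciTopology α] {f : X → α} {T : Set X} (hf : Continuous f)
    (hT : T.Nonempty) (hb : BddBelow (f '' T)) : sInf (f '' closure T) = sInf (f '' T) :=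
  ((isGLB_iff_of_subset_of_subset_closure (Set.image_mono subset_closure)
    (image_closure_subset_closure_image hf)).1 (isGLB_csInf (hT.image f) hb)).csInf_eq
    ((hT.mono subset_closure).image f)

theorem csInf_image_eq_of_forall_exists_le {X α : Type*} [ConditionallyCompleteLattice α]
    {f : X → α} {T T' : Set X} (hsub : T' ⊆ T) (hle : ∀ F ∈ T, ∃ G ∈ T', f G ≤ f F)
    (hT : T.Nonempty) (hb : BddBelow (f '' T)) :
    sInf (f '' T') = sInf (f '' T) := by
  have hlower : lowerBounds (f '' T') = lowerBounds (f '' T) := by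
    refine (lowerBounds_mono_set (Set.image_mono hsub)).antisymm' ?_
    rintro b hb _ ⟨F, hF, rfl⟩
    obtain ⟨G, hG, hGF⟩ := hle F hF
    exact (hb ⟨G, hG, rfl⟩).trans hGF
  obtain ⟨F, hF⟩ := hT
  obtain ⟨G, hG, -⟩ := hle F hF
  exact ((isGLB_congr hlower).2 (isGLB_csInf ⟨f F, F, hF, rfl⟩ hb)).csInf_eq ⟨f G, G, hG, rfl⟩

section Distributions

variable {S : Finset ℝ}

theorem continuous_distMean : Continuous (distMean S) :=
  continuous_finsetSum _ fun s _ => (EuclideanSpace.proj s).continuous.mul continuous_const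

theorem min'_le_distMean (hS : S.Nonempty) {F : EuclideanSpace ℝ ↥S} (hF : F ∈ distSet S) :
    S.min' hS ≤ distMean S F :=
  calc S.min' hS = ∑ s : ↥S, F s * S.min' hS := by rw [← sum_mul, hF.2, one_mul]
    _ ≤ distMean S F := sum_le_sum fun s _ => mul_le_mul_of_nonneg_left (S.min'_le s s.2) (hF.1 s)

theorem bddBelow_distMean_image (hS : S.Nonempty) {T : Set (EuclideanSpace ℝ ↥S)}
    (hT : T ⊆ distSet S) : BddBelow (distMean S '' T) :=
  ⟨S.min' hS, by rintro _ ⟨F, hF, rfl⟩; exact min'_le_distMean hS (hT hF)⟩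

open Classical in
def distMap (S : Finset ℝ) (φ : ↥S → ↥S) (F : EuclideanSpace ℝ ↥S) : EuclideanSpace ℝ ↥S :=
  WithLp.toLp 2 fun s => ∑ t : ↥S, if φ t = s then F t else 0

variable {φ : ↥S → ↥S} {F : EuclideanSpace ℝ ↥S}

theorem distMap_mem_distSet (hF : F ∈ distSet S) : distMap S φ F ∈ distSet S := by
  classical
  refine ⟨fun s => sum_nonneg fun t _ => ?_, ?_⟩
  · split_ifs
    exacts [hF.1 t, le_rfl]
  · simpa [distMap, sum_comm (γ := ↥S)] using hF.2

theorem distMap_apply_eq_zero {s : ↥S} (hs : s ∉ Set.range φ) : distMap S φ F s = 0 :=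
  sum_eq_zero fun t _ => if_neg fun h => hs ⟨t, h⟩

theorem distMean_distMap : distMean S (distMap S φ F) = ∑ t : ↥S, F t * φ t := by
  classical
  simp only [distMean, distMap, PiLp.toLp_apply, sum_mul, ite_mul, zero_mul]
  rw [sum_comm]
  simp

theorem distMean_distMap_le (hφ : ∀ s, φ s ≤ s) (hF : F ∈ distSet S) :
    distMean S (distMap S φ F) ≤ distMean S F := by
  rw [distMean_distMap]
  exact sum_le_sum fun t _ => mul_le_mul_of_nonneg_left (by exact_mod_cast hφ t) (hF.1 t)

theorem probOf_distMap {n : ℕ} (B : Set (Fin n → ↥S)) :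
    probOf S n (distMap S φ F) B = probOf S n F ((φ ∘ ·) ⁻¹' B) := by
  classical
  have hprod : ∀ y : Fin n → ↥S, ∏ i, distMap S φ F (y i) =
      ∑ w : Fin n → ↥S, if φ ∘ w = y then ∏ i, F (w i) else 0 := fun y => by
    simp only [distMap, PiLp.toLp_apply, prod_univ_sum, Fintype.piFinset_univ, prod_ite_zero,
      mem_univ, true_implies, funext_iff, Function.comp_apply]
  simp only [probOf, hprod, ite_sum_zero]
  rw [sum_comm]
  refine sum_congr rfl fun w _ => ?_
  rw [sum_eq_single (φ ∘ w) (fun y _ hy => by simp [Ne.symm hy]) (by simp)]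
  simp

end Distributions

section SortedTuples

variable {S : Finset ℝ} {n : ℕ} {φ : ↥S → ↥S}

theorem sortTup_comp (hφ : Monotone φ) (y : Fin n → ↥S) :
    sortTup S n (φ ∘ y) = φ ∘ sortTup S n y := by
  have hy : φ ∘ y = (φ ∘ (y ∘ Tuple.sort y)) ∘ ⇑(Tuple.sort y)⁻¹ := by
    ext i; simp
  rw [sortTup, hy, Tuple.comp_perm_comp_sort_eq_comp_sort,
    Tuple.sort_eq_refl_iff_monotone.mpr (hφ.comp (Tuple.monotone_sort y))]
  rfl

theorem probSorted_distMap (hφ : Monotone φ) (F : EuclideanSpace ℝ ↥S) (A : Set (Fin n → ↥S)) :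
    probSorted S n (distMap S φ F) A = probSorted S n F ((φ ∘ ·) ⁻¹' A) := by
  simp only [probSorted, probOf_distMap, Set.preimage_ofPred_eq, sortTup_comp hφ]
  rfl

theorem probSorted_congr {F : EuclideanSpace ℝ ↥S} {A B : Set (Fin n → ↥S)}
    (h : ∀ z, Monotone z → (z ∈ A ↔ z ∈ B)) : probSorted S n F A = probSorted S n F B := by
  unfold probSorted
  congr 1
  ext y
  exact h _ (Tuple.monotone_sort y)

end SortedTuples

theorem lexLowLE_comp_iff {n : ℕ} {α : Type*} [LinearOrder α] {x z : Fin n → α} {f : α → α}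
    (hlt : ∀ i s, x i < f s ↔ x i < s) (heq : ∀ i s, x i = f s ↔ x i = s) :
    lexLowLE x (f ∘ z) ↔ lexLowLE x z := by
  simp only [lexLowLE, funext_iff, Function.comp_apply, hlt, heq]

section AugFloor

variable {S : Finset ℝ} {hS : S.Nonempty} {C : Set ↥S}

open Classical in
def augFloor (S : Finset ℝ) (hS : S.Nonempty) (C : Set ↥S) (s : ↥S) : ↥S :=
  (univ.filter fun t => t ∈ aug S hS C ∧ t ≤ s).max'
    ⟨sMinElt S hS, mem_filter.2 ⟨mem_univ _, Or.inl (Or.inr rfl), S.min'_le s s.2⟩⟩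

theorem augFloor_mem_aug_and_le (s : ↥S) :
    augFloor S hS C s ∈ aug S hS C ∧ augFloor S hS C s ≤ s := by
  classical
  exact (mem_filter.1 (max'_mem _ _ : augFloor S hS C s ∈ _)).2

theorem augFloor_le (s : ↥S) : augFloor S hS C s ≤ s :=
  (augFloor_mem_aug_and_le s).2

theorem le_augFloor {t s : ↥S} (ht : t ∈ aug S hS C) (hts : t ≤ s) : t ≤ augFloor S hS C s := by
  classical
  exact le_max' _ t (mem_filter.2 ⟨mem_univ _, ht, hts⟩)

theorem monotone_augFloor : Monotone (augFloor S hS C) := fun s _ h =>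
  le_augFloor (augFloor_mem_aug_and_le s).1 ((augFloor_le s).trans h)

theorem range_augFloor_subset : Set.range (augFloor S hS C) ⊆ aug S hS C := by
  rintro _ ⟨s, rfl⟩
  exact (augFloor_mem_aug_and_le s).1

theorem lt_augFloor_iff {c s : ↥S} (hc : c ∈ C) : c < augFloor S hS C s ↔ c < s := by
  classical
  refine ⟨fun h => h.trans_le (augFloor_le s), fun hcs => ?_⟩
  have hne : (univ.filter fun u : ↥S => c < u).Nonempty := ⟨s, mem_filter.2 ⟨mem_univ _, hcs⟩⟩
  obtain ⟨t, hct, ht_min⟩ : ∃ t, c < t ∧ ∀ u, c < u → t ≤ u :=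
    ⟨_, (mem_filter.1 (min'_mem _ hne)).2, fun u hu => min'_le _ u (mem_filter.2 ⟨mem_univ _, hu⟩)⟩
  exact hct.trans_le (le_augFloor (Or.inr ⟨c, hc, hct, ht_min⟩) (ht_min s hcs))

theorem eq_augFloor_iff {c s : ↥S} (hc : c ∈ C) : c = augFloor S hS C s ↔ c = s := by
  refine ⟨fun h => le_antisymm (h.trans_le (augFloor_le s)) ?_, fun h => ?_⟩
  · exact not_lt.1 fun hcs => ((lt_augFloor_iff hc).2 hcs).ne h
  · exact le_antisymm (le_augFloor (Or.inl (Or.inl hc)) h.le) ((augFloor_le s).trans h.ge)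

end AugFloor

theorem probSorted_distMap_augFloor {S : Finset ℝ} (hS : S.Nonempty) {n : ℕ} (x : Fin n → ↥S)
    (F : EuclideanSpace ℝ ↥S) :
    probSorted S n (distMap S (augFloor S hS (Set.range x)) F) (upperSet S n lexLowLE x) =
      probSorted S n F (upperSet S n lexLowLE x) := by
  rw [probSorted_distMap monotone_augFloor]
  refine probSorted_congr fun z hz => ?_
  have hlex : lexLowLE x (augFloor S hS (Set.range x) ∘ z) ↔ lexLowLE x z :=
    lexLowLE_comp_iff (fun i _ => lt_augFloor_iff ⟨i, rfl⟩) (fun i _ => eq_augFloor_iff ⟨i, rfl⟩)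
  simp only [Set.mem_preimage, upperSet, sortedTuples, Set.mem_ofPred_eq, hlex,
    monotone_augFloor.comp hz, hz]

theorem distMap_augFloor_mem_intLikelySortedC {S : Finset ℝ} (hS : S.Nonempty) {n : ℕ}
    {x : Fin n → ↥S} {α : ℝ} {F : EuclideanSpace ℝ ↥S}
    (hF : F ∈ intLikelySorted S n (upperSet S n lexLowLE x) α) :
    distMap S (augFloor S hS (Set.range x)) F ∈
      intLikelySortedC S n (aug S hS (Set.range x)) (upperSet S n lexLowLE x) α := by
  have hdist := distMap_mem_distSet (φ := augFloor S hS (Set.range x)) hF.1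
  refine ⟨⟨hdist, fun s hs => distMap_apply_eq_zero fun hs' => hs (range_augFloor_subset hs')⟩,
    hdist, ?_⟩
  rw [probSorted_distMap_augFloor]
  exact hF.2

theorem stmt18_general (S : Finset ℝ) (hS : S.Nonempty) (n : ℕ)
    (α : ℝ)
    (x : Fin n → ↥S)
    (hne : (intLikelySorted S n (upperSet S n lexLowLE x) α).Nonempty) :
    pessimal S n lexLowLE α x =
      sInf (distMean S ''
        likelySortedC S n (aug S hS (Set.range x)) (upperSet S n lexLowLE x) α) := by
  set A := upperSet S n lexLowLE x
  have hbdd : BddBelow (distMean S '' intLikelySorted S n A α) :=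
    bddBelow_distMean_image hS fun F hF => hF.1
  have hsub : intLikelySortedC S n (aug S hS (Set.range x)) A α ⊆ intLikelySorted S n A α :=
    Set.inter_subset_right
  obtain ⟨F, hF⟩ := hne
  unfold pessimal likelySorted likelySortedC
  rw [csInf_image_closure continuous_distMean ⟨F, hF⟩ hbdd,
    csInf_image_closure continuous_distMean ⟨_, distMap_augFloor_mem_intLikelySortedC hS hF⟩
      (hbdd.mono (Set.image_mono hsub)),
    csInf_image_eq_of_forall_exists_le hsub
      (fun G hG => ⟨_, distMap_augFloor_mem_intLikelySortedC hS hG,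
        distMean_distMap_le augFloor_le hG.1⟩) ⟨F, hF⟩ hbdd]

/-- for the low lexicographic order `T_ℓ` and `C` the set of
support values occurring in `x`,
`B_{T_ℓ}^*(x) = inf {E[F] : F ∈ 𝒻_{C⁺}(Ω(x, T_ℓ), α)}`. -/
theorem stmt18 (S : Finset ℝ) (hS : S.Nonempty) (n : ℕ) (hn : 1 ≤ n)
    (α : ℝ) (hα0 : 0 ≤ α) (hα1 : α < 1)
    (x : Fin n → ↥S) (hx : x ∈ sortedTuples S n)
    (hne : (intLikelySorted S n (upperSet S n lexLowLE x) α).Nonempty) :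
    pessimal S n lexLowLE α x =
      sInf (distMean S ''
        likelySortedC S n (aug S hS (Set.range x)) (upperSet S n lexLowLE x) α) :=
  stmt18_general S hS n α x hne

end
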